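/- Let A(s) be a self-adjoint-endomorphism-valued solution of the Riccati equation A′(s) + A(s)² + R(s) = 0 on ℝⁿ, with |R(s)| ≤ C_R and |R′(s)| ≤ C_{R′} for small s ≥ 0. Suppose there exist ε₀ > 0 and a self-adjoint A₀ with A(0) ≥ A₀, A₀ ≤ C_R·Id, and ⟨A₀w, w⟩ ≥ ε₀ ⟨R(0)w, w⟩² for all unit vectors w. Then there exist s₀ = s₀(C_R) > 0 and C = C(C_R, C_{R′}, ε₀) > 0 such that A(s) ≥ −C s² · Id for all s ∈ (0, s₀]. -/

import Mathlib

open Set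

noncomputable section

/-- Euclidean space `ℝⁿ`. -/
abbrev E (n : ℕ) := EuclideanSpace ℝ (Fin n)

/-- A self-adjoint (continuous linear) endomorphism of `ℝⁿ`. -/
def SelfAdj {n : ℕ} (A : E n →L[ℝ] E n) : Prop :=
  ∀ v w : E n, (inner ℝ (A v) w : ℝ) = inner ℝ v (A w)

/-- `A ≤ B` in the sense of quadratic forms. -/
def EndLE {n : ℕ} (A B : E n →L[ℝ] E n) : Prop :=
  ∀ v : E n, (inner ℝ (A v) v : ℝ) ≤ inner ℝ (B v) v


/-!
On a short interval `[0, τ]` the Riccati comparison principle puts `A` above the barrier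
`B(s) = A₀ - s (R(0) + A₀²) - L s²`, which is a subsolution `B' + B² + R ≤ 0` once `L` is large,
because `R` is Lipschitz. Since `0 ≤ A₀ ≤ C_R` gives `A₀² ≤ C_R A₀`, and
`s ⟨R(0) w, w⟩ ≤ ε₀ ⟨R(0) w, w⟩² / 2 + s² / (2 ε₀) ≤ ⟨A₀ w, w⟩ / 2 + s² / (2 ε₀)`,
the barrier is `≥ -C s²`. On `[τ, 1/2]`, `a = ⟨A w, w⟩` satisfies `a' ≤ C_R - a²`, so a very
negative value would blow down to `-∞` before time `1`; hence `A ≥ -(C_R + 3) ≥ -C s²`.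
-/

open scoped RealInnerProductSpace

variable {F : Type*} [NormedAddCommGroup F] [InnerProductSpace ℝ F]

theorem abs_inner_apply_self_le (T : F →L[ℝ] F) (v : F) : |⟪T v, v⟫| ≤ ‖T‖ * ‖v‖ ^ 2 := by
  calc |⟪T v, v⟫| ≤ ‖T v‖ * ‖v‖ := abs_real_inner_le_norm _ _
    _ ≤ ‖T‖ * ‖v‖ * ‖v‖ := by gcongr; exact T.le_opNorm v
    _ = ‖T‖ * ‖v‖ ^ 2 := by ring

theorem le_inner_apply_self_of_forall_norm_eq_one {T : F →L[ℝ] F} {c : ℝ}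
    (h : ∀ u : F, ‖u‖ = 1 → c ≤ ⟪T u, u⟫) (v : F) : c * ‖v‖ ^ 2 ≤ ⟪T v, v⟫ := by
  rcases eq_or_ne v 0 with rfl | hv
  · simp
  have hv' : 0 < ‖v‖ := norm_pos_iff.2 hv
  have hu := h (‖v‖⁻¹ • v) (norm_smul_inv_norm hv)
  rw [map_smul, real_inner_smul_left, real_inner_smul_right, ← mul_assoc,
    ← sq, inv_pow, le_inv_mul_iff₀ (by positivity)] at hu
  linarith

section CompleteSpace

variable [CompleteSpace F]

theorem IsSelfAdjoint.inner_comp_self_apply {A : F →L[ℝ] F} (hA : IsSelfAdjoint A) (v : F) :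
    ⟪(A ∘L A) v, v⟫ = ‖A v‖ ^ 2 := by
  rw [ContinuousLinearMap.comp_apply, ← real_inner_self_eq_norm_sq]
  exact hA.isSymmetric (A v) v

theorem IsSelfAdjoint.sq_norm_apply_le {S : F →L[ℝ] F} (hS : IsSelfAdjoint S) {c : ℝ}
    (hc : 0 < c) (hS0 : ∀ v, 0 ≤ ⟪S v, v⟫) (hSc : ∀ v, ⟪S v, v⟫ ≤ c * ‖v‖ ^ 2) (v : F) :
    ‖S v‖ ^ 2 ≤ c * ⟪S v, v⟫ := by
  -- `c (c S - S²) = (c - S) S (c - S) + S (c - S) S` is a sum of positive operators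
  have hsymm : ⟪S (S v), v⟫ = ‖S v‖ ^ 2 := by
    rw [← real_inner_self_eq_norm_sq]; exact hS.isSymmetric (S v) v
  have hexpand : ⟪S (c • v - S v), c • v - S v⟫
      = c ^ 2 * ⟪S v, v⟫ - 2 * c * ‖S v‖ ^ 2 + ⟪S (S v), S v⟫ := by
    simp only [map_sub, map_smul, inner_sub_left, inner_sub_right, real_inner_smul_left,
      real_inner_smul_right, hsymm, real_inner_self_eq_norm_sq]
    ring
  have h₁ := hS0 (c • v - S v)
  have h₂ := hSc (S v)
  rw [hexpand] at h₁
  nlinarith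

theorem IsSelfAdjoint.norm_le_of_inner_le {S : F →L[ℝ] F} (hS : IsSelfAdjoint S) {c : ℝ}
    (hc : 0 < c) (hS0 : ∀ v, 0 ≤ ⟪S v, v⟫) (hSc : ∀ v, ⟪S v, v⟫ ≤ c * ‖v‖ ^ 2) :
    ‖S‖ ≤ c := by
  refine S.opNorm_le_bound hc.le fun v => ?_
  refine pow_le_pow_iff_left₀ (norm_nonneg _) (by positivity) two_ne_zero |>.1 ?_
  calc ‖S v‖ ^ 2 ≤ c * ⟪S v, v⟫ := hS.sq_norm_apply_le hc hS0 hSc v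
    _ ≤ c * (c * ‖v‖ ^ 2) := by gcongr; exact hSc v
    _ = (c * ‖v‖) ^ 2 := by ring

theorem IsSelfAdjoint.apply_eq_zero_of_isMinOn {T : F →L[ℝ] F} (hT : IsSelfAdjoint T) {w : F}
    (hw : ‖w‖ = 1) (hpos : ∀ v ∈ Metric.sphere (0 : F) 1, 0 ≤ ⟪T v, v⟫)
    (hzero : ⟪T w, w⟫ = 0) : T w = 0 := by
  have hmin : IsMinOn T.reApplyInnerSelf (Metric.sphere (0 : F) ‖w‖) w := fun v hv => by
    simpa [ContinuousLinearMap.reApplyInnerSelf, hzero, hw] using hpos v (by simpa [hw] using hv)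
  have heig := (hT.hasEigenvector_of_isMinOn (norm_ne_zero_iff.1 (by simp [hw])) hmin).apply_eq_smul
  rw [ContinuousLinearMap.coe_coe] at heig
  rw [heig, real_inner_smul_left, real_inner_self_eq_norm_sq, hw, one_pow, mul_one] at hzero
  rw [heig, hzero, zero_smul]

end CompleteSpace

theorem HasDerivAt.inner_apply_self {A : ℝ → F →L[ℝ] F} {A' : F →L[ℝ] F} {t : ℝ}
    (hA : HasDerivAt A A' t) (v : F) :
    HasDerivAt (fun s => ⟪A s v, v⟫) ⟪A' v, v⟫ t := by
  simpa using (hA.clm_apply (hasDerivAt_const t v)).inner ℝ (hasDerivAt_const t v)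

theorem HasDerivAt.nonpos_of_forall_Ico_le {f : ℝ → ℝ} {f' a b : ℝ} (hf : HasDerivAt f f' b)
    (hab : a < b) (hmin : ∀ t ∈ Ico a b, f b ≤ f t) : f' ≤ 0 := by
  have hloc : IsLocalMinOn f (Iic b) b := by
    filter_upwards [Ioc_mem_nhdsLE hab] with t ht
    rcases ht.2.lt_or_eq with htb | rfl
    exacts [hmin t ⟨ht.1.le, htb⟩, le_rfl]
  have hcone : (-1 : ℝ) ∈ posTangentConeAt (Iic b) b :=
    mem_posTangentConeAt_of_segment_subset <| by
      rw [segment_symm]; exact (segment_subset_Icc (by linarith)).trans Icc_subset_Iic_self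
  simpa using hloc.hasFDerivWithinAt_nonneg hf.hasFDerivAt.hasFDerivWithinAt hcone

theorem exists_first_nonpos {X : Type*} [TopologicalSpace X] [T2Space X] {K : Set X}
    (hK : IsCompact K) {f : ℝ → X → ℝ} {a b : ℝ}
    (hf : ContinuousOn (Function.uncurry f) (Icc a b ×ˢ K)) (ha : ∀ x ∈ K, 0 < f a x)
    (hb : ∃ t ∈ Icc a b, ∃ x ∈ K, f t x ≤ 0) :
    ∃ T ∈ Ioc a b, ∃ x ∈ K, f T x = 0 ∧ (∀ y ∈ K, 0 ≤ f T y) ∧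
      ∀ t ∈ Ico a T, ∀ y ∈ K, 0 < f t y := by
  set S := Icc a b ×ˢ K ∩ Function.uncurry f ⁻¹' Iic 0
  have hS : IsCompact S := (isCompact_Icc.prod hK).of_isClosed_subset
    (hf.preimage_isClosed_of_isClosed (isClosed_Icc.prod hK.isClosed) isClosed_Iic)
    inter_subset_left
  have hne : (Prod.fst '' S).Nonempty := by
    obtain ⟨t, ht, x, hx, htx⟩ := hb
    exact ⟨t, (t, x), ⟨⟨ht, hx⟩, htx⟩, rfl⟩
  obtain ⟨⟨T, x⟩, ⟨⟨hT, hx⟩, hTx⟩, hTinf⟩ := (hS.image continuous_fst).sInf_mem hne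
  dsimp only at hTinf
  have hbefore : ∀ t ∈ Ico a T, ∀ y ∈ K, 0 < f t y := by
    intro t ht y hy
    by_contra! hty
    have := csInf_le (hS.image continuous_fst).bddBelow
      ⟨(t, y), ⟨⟨⟨ht.1, ht.2.le.trans hT.2⟩, hy⟩, hty⟩, rfl⟩
    linarith [ht.2]
  have hTa : a < T := hT.1.lt_of_ne fun haT => by
    subst haT; exact (ha x hx).not_ge hTx
  have hnonneg : ∀ y ∈ K, 0 ≤ f T y := by
    intro y hy
    have hcl : IsClosed (Icc a b ∩ (fun t => f t y) ⁻¹' Ici 0) :=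
      (hf.comp (continuousOn_id.prodMk continuousOn_const) fun t ht => ⟨ht, hy⟩)
        |>.preimage_isClosed_of_isClosed isClosed_Icc isClosed_Ici
    have hsub : Ico a T ⊆ Icc a b ∩ (fun t => f t y) ⁻¹' Ici 0 :=
      fun t ht => ⟨⟨ht.1, ht.2.le.trans hT.2⟩, (hbefore t ht y hy).le⟩
    refine (hcl.closure_subset_iff.2 hsub ?_).2
    rw [closure_Ico hTa.ne]
    exact right_mem_Icc.2 hTa.le
  exact ⟨T, ⟨hTa, hT.2⟩, x, hx, le_antisymm hTx (hnonneg x hx), hnonneg, hbefore⟩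

/-- Comparison with `-(b - t)⁻¹ - (c + 1)`, which blows down to `-∞` at `b`. -/
theorem riccati_scalar_lower_bound {a a' : ℝ → ℝ} {c t₀ b : ℝ} (hc : 0 ≤ c) (hb : t₀ < b)
    (ha : ContinuousOn a (Icc t₀ b)) (ha' : ∀ t ∈ Ico t₀ b, HasDerivAt a (a' t) t)
    (hle : ∀ t ∈ Ico t₀ b, a' t ≤ c - a t ^ 2) : -(b - t₀)⁻¹ - (c + 1) ≤ a t₀ := by
  by_contra! hlt
  obtain ⟨M, hM⟩ := isCompact_Icc.exists_bound_of_continuousOn ha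
  simp only [Real.norm_eq_abs] at hM
  set ψ : ℝ → ℝ := fun t => -(b - t)⁻¹ - (c + 1)
  set s := b - (M + c + 2)⁻¹
  have hinv : (b - t₀)⁻¹ < M + c + 2 := by
    linarith [(abs_le.1 (hM t₀ (left_mem_Icc.2 hb.le))).1]
  have hpos : 0 < M + c + 2 := (inv_pos.2 (sub_pos.2 hb)).trans hinv
  have hts : t₀ < s := by linarith [inv_lt_of_inv_lt₀ (sub_pos.2 hb) hinv]
  have hsb : s < b := by linarith [inv_pos.2 hpos]
  have hψ : ∀ t, t < b → HasDerivAt ψ (-((b - t)⁻¹ ^ 2)) t := by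
    intro t ht
    refine ((((hasDerivAt_id' t).const_sub b).inv (sub_pos.2 ht).ne').neg.sub_const
      (c + 1)).congr_deriv ?_
    field_simp
  have hbound : ∀ t ∈ Ico t₀ s, a t = ψ t → a' t < -((b - t)⁻¹ ^ 2) := by
    intro t ht heq
    have hle' := hle t ⟨ht.1, ht.2.trans hsb⟩
    have hbt : 0 < (b - t)⁻¹ := inv_pos.2 (by linarith [ht.2])
    rw [heq] at hle'
    nlinarith
  have has := image_le_of_deriv_right_lt_deriv_boundary' (ha.mono (Icc_subset_Icc_right hsb.le))
    (fun t ht => (ha' t ⟨ht.1, ht.2.trans hsb⟩).hasDerivWithinAt) hlt.le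
    (fun t ht => (hψ t (ht.2.trans_lt hsb)).continuousAt.continuousWithinAt)
    (fun t ht => (hψ t (ht.2.trans hsb)).hasDerivWithinAt) hbound (right_mem_Icc.2 hts.le)
  have hψs : ψ s = -(M + c + 2) - (c + 1) := by simp [ψ, s]
  linarith [(abs_le.1 (hM s ⟨hts.le, hsb.le⟩)).1]

theorem riccati_uniform_lower_bound [CompleteSpace F] {A R : ℝ → F →L[ℝ] F} {c : ℝ} (hc : 0 ≤ c)
    (hA : ∀ t ∈ Icc (0 : ℝ) 1, HasDerivAt A (-(A t ∘L A t) - R t) t)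
    (hAsa : ∀ t ∈ Icc (0 : ℝ) 1, IsSelfAdjoint (A t)) (hR : ∀ t ∈ Icc (0 : ℝ) 1, ‖R t‖ ≤ c)
    {t : ℝ} (ht : t ∈ Icc (0 : ℝ) (1 / 2)) {v : F} (hv : ‖v‖ = 1) : -(c + 3) ≤ ⟪A t v, v⟫ := by
  have hsub : Icc t 1 ⊆ Icc 0 1 := Icc_subset_Icc_left ht.1
  have hderiv : ∀ s ∈ Icc t 1,
      HasDerivAt (fun s => ⟪A s v, v⟫) ⟪(-(A s ∘L A s) - R s) v, v⟫ s :=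
    fun s hs => (hA s (hsub hs)).inner_apply_self v
  have hslope : ∀ s ∈ Ico t 1, ⟪(-(A s ∘L A s) - R s) v, v⟫ ≤ c - ⟪A s v, v⟫ ^ 2 := by
    intro s hs
    have hs' := hsub (Ico_subset_Icc_self hs)
    have hAv : |⟪A s v, v⟫| ≤ ‖A s v‖ := by simpa [hv] using abs_real_inner_le_norm (A s v) v
    have hRv : |⟪R s v, v⟫| ≤ c := by
      simpa [hv] using (abs_inner_apply_self_le (R s) v).trans (by simpa [hv] using hR s hs')
    simp only [sub_apply, neg_apply, inner_sub_left,
      inner_neg_left, (hAsa s hs').inner_comp_self_apply]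
    nlinarith [abs_le.1 hRv, sq_abs ⟪A s v, v⟫, abs_nonneg ⟪A s v, v⟫]
  have hbound := riccati_scalar_lower_bound hc (by linarith [ht.2] : t < 1)
    (fun s hs => (hderiv s hs).continuousAt.continuousWithinAt)
    (fun s hs => hderiv s (Ico_subset_Icc_self hs)) hslope
  have hinv : (1 - t)⁻¹ ≤ 2 := by
    rw [inv_le_comm₀ (by linarith [ht.2]) two_pos]; linarith [ht.2]
  linarith

/-- `B - g` is a strict subsolution when `g' = (2 β + 1) g` and `0 < g < 1`. -/
theorem IsSelfAdjoint.inner_sub_smul_one_subsolution_lt [CompleteSpace F] {B B' R : F →L[ℝ] F}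
    (hB : IsSelfAdjoint B) {β g : ℝ} (hβ : ‖B‖ ≤ β) (hg : 0 < g) (hg1 : g < 1) {w : F}
    (hw : ‖w‖ = 1) (hsub : ⟪(B' + B ∘L B + R) w, w⟫ ≤ 0) :
    ⟪(B' - ((2 * β + 1) * g) • 1 + (B - g • 1) ∘L (B - g • 1) + R : F →L[ℝ] F) w, w⟫ < 0 := by
  have hsa : IsSelfAdjoint (B - g • 1) := hB.sub ((IsSelfAdjoint.all g).smul (IsSelfAdjoint.one _))
  have hBw : -β ≤ ⟪B w, w⟫ := by
    have := (abs_le.1 (abs_inner_apply_self_le B w)).1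
    rw [hw, one_pow, mul_one] at this
    linarith
  simp only [add_apply, inner_add_left, hB.inner_comp_self_apply, hsa.inner_comp_self_apply]
    at hsub ⊢
  simp only [sub_apply, smul_apply, one_apply_eq_self, inner_sub_left, real_inner_smul_left,
    norm_sub_sq_real, real_inner_smul_right, norm_smul, real_inner_self_eq_norm_sq, hw,
    Real.norm_eq_abs, abs_of_pos hg]
  nlinarith

section FiniteDimensional

variable [FiniteDimensional ℝ F]

/-- At the first time `T` at which `A - B` fails to be positive definite, a unit null vector `w`
of `A T - B T` is an eigenvector, so `A T w = B T w`, and the derivative of `⟪(A - B) w, w⟫`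
at `T` is `-⟪(B' + B² + R) w, w⟫ > 0`: impossible for a first zero. -/
theorem riccati_strict_comparison {A B B' R : ℝ → F →L[ℝ] F} {τ : ℝ}
    (hA : ∀ t ∈ Icc 0 τ, HasDerivAt A (-(A t ∘L A t) - R t) t)
    (hB : ∀ t ∈ Icc 0 τ, HasDerivAt B (B' t) t)
    (hAsa : ∀ t ∈ Icc 0 τ, IsSelfAdjoint (A t)) (hBsa : ∀ t ∈ Icc 0 τ, IsSelfAdjoint (B t))
    (hsub : ∀ t ∈ Icc 0 τ, ∀ w, ‖w‖ = 1 → ⟪(B' t + B t ∘L B t + R t) w, w⟫ < 0)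
    (h0 : ∀ w, ‖w‖ = 1 → ⟪B 0 w, w⟫ < ⟪A 0 w, w⟫) :
    ∀ t ∈ Icc 0 τ, ∀ w, ‖w‖ = 1 → ⟪B t w, w⟫ < ⟪A t w, w⟫ := by
  by_contra! ⟨t, ht, v, hv, hle⟩
  set f : ℝ → F → ℝ := fun t v => ⟪(A t - B t) v, v⟫ with hf
  have hcont : ContinuousOn (Function.uncurry f) (Icc 0 τ ×ˢ Metric.sphere (0 : F) 1) := by
    have hAc : ContinuousOn A (Icc 0 τ) := fun t ht => (hA t ht).continuousAt.continuousWithinAt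
    have hBc : ContinuousOn B (Icc 0 τ) := fun t ht => (hB t ht).continuousAt.continuousWithinAt
    exact (((hAc.sub hBc).comp continuousOn_fst fun p hp => hp.1).clm_apply
      continuousOn_snd).inner continuousOn_snd
  obtain ⟨T, hT, w, hw, hfT, hTpos, hbefore⟩ := exists_first_nonpos (isCompact_sphere 0 1) hcont
    (fun v hv => by simpa [hf, inner_sub_left] using h0 v (by simpa using hv))
    ⟨t, ht, v, by simpa using hv, by simpa [hf, inner_sub_left] using hle⟩
  have hTτ : T ∈ Icc 0 τ := Ioc_subset_Icc_self hT
  have hw1 : ‖w‖ = 1 := by simpa using hw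
  have hAw : A T w = B T w := by
    have := ((hAsa T hTτ).sub (hBsa T hTτ)).apply_eq_zero_of_isMinOn hw1 hTpos hfT
    rwa [sub_apply, sub_eq_zero] at this
  have hderiv := ((hA T hTτ).sub (hB T hTτ)).inner_apply_self w
  have hnonpos := hderiv.nonpos_of_forall_Ico_le hT.1 fun t ht =>
    hfT.trans_le (hbefore t ht w hw).le
  have hB'w := hsub T hTτ w hw1
  simp only [sub_apply, add_apply, neg_apply, inner_sub_left, inner_add_left, inner_neg_left,
    (hAsa T hTτ).inner_comp_self_apply, (hBsa T hTτ).inner_comp_self_apply, hAw] at hnonpos hB'w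
  linarith

theorem riccati_comparison {A B B' R : ℝ → F →L[ℝ] F} {τ : ℝ}
    (hA : ∀ t ∈ Icc 0 τ, HasDerivAt A (-(A t ∘L A t) - R t) t)
    (hB : ∀ t ∈ Icc 0 τ, HasDerivAt B (B' t) t)
    (hAsa : ∀ t ∈ Icc 0 τ, IsSelfAdjoint (A t)) (hBsa : ∀ t ∈ Icc 0 τ, IsSelfAdjoint (B t))
    (hsub : ∀ t ∈ Icc 0 τ, ∀ w, ⟪(B' t + B t ∘L B t + R t) w, w⟫ ≤ 0)
    (h0 : ∀ w, ⟪B 0 w, w⟫ ≤ ⟪A 0 w, w⟫) :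
    ∀ t ∈ Icc 0 τ, ∀ w, ⟪B t w, w⟫ ≤ ⟪A t w, w⟫ := by
  obtain ⟨β, hβ⟩ := isCompact_Icc.exists_bound_of_continuousOn
    fun t ht => (hB t ht).continuousAt.continuousWithinAt
  have hpert : ∀ η ∈ Ioo (0 : ℝ) 1, ∀ t ∈ Icc 0 τ, ∀ w, ‖w‖ = 1 →
      ⟪B t w, w⟫ - η < ⟪A t w, w⟫ := by
    intro η hη t ht w hw
    have hβ0 : 0 ≤ β := (norm_nonneg _).trans (hβ t ht)
    set g : ℝ → ℝ := fun t => η * Real.exp ((2 * β + 1) * (t - τ))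
    have hg : ∀ t, HasDerivAt g ((2 * β + 1) * g t) t := fun t => by
      refine ((((hasDerivAt_id' t).sub_const τ).const_mul _).exp.const_mul η).congr_deriv ?_
      ring
    have hgpos : ∀ t, 0 < g t := fun t => mul_pos hη.1 (Real.exp_pos _)
    have hgη : ∀ t ∈ Icc 0 τ, g t ≤ η := fun t ht =>
      mul_le_of_le_one_right hη.1.le <| Real.exp_le_one_iff.2 <|
        mul_nonpos_of_nonneg_of_nonpos (by positivity) (by linarith [ht.2])
    have hstrict := riccati_strict_comparison hA
      (fun t ht => (hB t ht).sub ((hg t).smul_const 1)) hAsa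
      (fun t ht => (hBsa t ht).sub ((IsSelfAdjoint.all (g t)).smul (IsSelfAdjoint.one _)))
      (fun t ht w hw => (hBsa t ht).inner_sub_smul_one_subsolution_lt (hβ t ht) (hgpos t)
        ((hgη t ht).trans_lt hη.2) hw (hsub t ht w))
      (fun w hw => by simpa [inner_sub_left, real_inner_smul_left, hw] using
        (sub_lt_self _ (hgpos 0)).trans_le (h0 w)) t ht w hw
    simp only [Pi.sub_apply, sub_apply, smul_apply, one_apply_eq_self, inner_sub_left,
      real_inner_smul_left, real_inner_self_eq_norm_sq, hw] at hstrict
    linarith [hgη t ht]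
  intro t ht w
  have hunit : ∀ u, ‖u‖ = 1 → 0 ≤ ⟪(A t - B t) u, u⟫ := by
    intro u hu
    rw [sub_apply, inner_sub_left, sub_nonneg]
    refine le_of_forall_pos_lt_add fun ε hε => ?_
    have := hpert (min ε (1 / 2)) ⟨by positivity, (min_le_right _ _).trans_lt one_half_lt_one⟩
      t ht u hu
    linarith [min_le_left ε (1 / 2)]
  simpa [inner_sub_left] using le_inner_apply_self_of_forall_norm_eq_one hunit w

end FiniteDimensional

/-- The second-order expansion `A₀ - t (R₀ + A₀²)` of the solution with `A(0) = A₀`, pushed down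
by `L t²` so as to become a subsolution. -/
def riccatiBarrier (A₀ R₀ : F →L[ℝ] F) (L t : ℝ) : F →L[ℝ] F :=
  A₀ - t • (R₀ + A₀ ∘L A₀) - (L * t ^ 2) • 1

section riccatiBarrier

open ContinuousLinearMap

variable {A₀ R₀ : F →L[ℝ] F} {L t : ℝ}

@[simp]
theorem riccatiBarrier_zero : riccatiBarrier A₀ R₀ L 0 = A₀ := by
  simp [riccatiBarrier]

theorem hasDerivAt_riccatiBarrier :
    HasDerivAt (riccatiBarrier A₀ R₀ L) (-(R₀ + A₀ ∘L A₀) - (2 * L * t) • 1) t := by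
  refine ((((hasDerivAt_id' t).smul_const (R₀ + A₀ ∘L A₀)).const_sub A₀).sub
    (((hasDerivAt_pow 2 t).const_mul L).smul_const (1 : F →L[ℝ] F))).congr_deriv ?_
  rw [one_smul]
  congr 2
  push_cast
  ring

theorem IsSelfAdjoint.riccatiBarrier [CompleteSpace F] (hA₀ : IsSelfAdjoint A₀)
    (hR₀ : IsSelfAdjoint R₀) (L t : ℝ) : IsSelfAdjoint (riccatiBarrier A₀ R₀ L t) := by
  have hA₀sq : IsSelfAdjoint (A₀ ∘L A₀) := (sq A₀ ▸ hA₀.pow 2 :)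
  exact (hA₀.sub ((IsSelfAdjoint.all t).smul (hR₀.add hA₀sq))).sub
    ((IsSelfAdjoint.all _).smul (IsSelfAdjoint.one _))

theorem norm_riccatiBarrier_sub_le (hL : 0 ≤ L) (ht : 0 ≤ t) :
    ‖riccatiBarrier A₀ R₀ L t - A₀‖ ≤ t * (‖R₀‖ + ‖A₀‖ ^ 2) + L * t ^ 2 := by
  have hA₀sq : ‖A₀ ∘L A₀‖ ≤ ‖A₀‖ ^ 2 := sq ‖A₀‖ ▸ A₀.opNorm_comp_le A₀
  have hone : ‖(1 : F →L[ℝ] F)‖ ≤ 1 := ContinuousLinearMap.norm_id_le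
  have hsub : riccatiBarrier A₀ R₀ L t - A₀ = -(t • (R₀ + A₀ ∘L A₀) + (L * t ^ 2) • 1) := by
    rw [riccatiBarrier]; abel
  rw [hsub, norm_neg]
  calc ‖t • (R₀ + A₀ ∘L A₀) + (L * t ^ 2) • (1 : F →L[ℝ] F)‖
      ≤ t * (‖R₀‖ + ‖A₀ ∘L A₀‖) + L * t ^ 2 * ‖(1 : F →L[ℝ] F)‖ := by
        refine (norm_add_le _ _).trans (add_le_add ?_ ?_) <;>
          rw [norm_smul, Real.norm_of_nonneg (by positivity)]
        exact mul_le_mul_of_nonneg_left (norm_add_le _ _) ht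
    _ ≤ t * (‖R₀‖ + ‖A₀‖ ^ 2) + L * t ^ 2 :=
        add_le_add (by gcongr) (mul_le_of_le_one_right (by positivity) hone)

theorem inner_riccatiBarrier_apply_self [CompleteSpace F] (hA₀ : IsSelfAdjoint A₀) (v : F) :
    ⟪riccatiBarrier A₀ R₀ L t v, v⟫
      = ⟪A₀ v, v⟫ - t * (⟪R₀ v, v⟫ + ‖A₀ v‖ ^ 2) - L * t ^ 2 * ‖v‖ ^ 2 := by
  rw [riccatiBarrier, sub_apply, sub_apply, inner_sub_left, inner_sub_left, smul_apply,
    smul_apply, real_inner_smul_left, real_inner_smul_left, add_apply, inner_add_left,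
    hA₀.inner_comp_self_apply, one_apply_eq_self, real_inner_self_eq_norm_sq]

theorem riccatiBarrier_isSubsolution {R : F →L[ℝ] F} {c c₁ : ℝ} (hA₀ : ‖A₀‖ ≤ c)
    (hR₀ : ‖R₀‖ ≤ c) (hc₁ : 0 ≤ c₁) (hR : ‖R - R₀‖ ≤ c₁ * t)
    (hL : (c + c ^ 2 + 1) * (c ^ 2 + 3 * c + 1) + c₁ ≤ 2 * L) (ht : t ∈ Icc 0 1)
    (hLt : L * t ≤ 1) (w : F) :
    ⟪((-(R₀ + A₀ ∘L A₀) - (2 * L * t) • 1) + riccatiBarrier A₀ R₀ L t ∘L riccatiBarrier A₀ R₀ L t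
      + R) w, w⟫ ≤ 0 := by
  set B := riccatiBarrier A₀ R₀ L t
  have hc : 0 ≤ c := (norm_nonneg _).trans hA₀
  have hL0 : 0 ≤ L := by nlinarith
  have hδ : ‖B - A₀‖ ≤ t * (c + c ^ 2 + 1) := by
    refine (norm_riccatiBarrier_sub_le hL0 ht.1).trans ?_
    nlinarith [pow_le_pow_left₀ (norm_nonneg A₀) hA₀ 2, ht.1]
  have hB : ‖B‖ ≤ c + (c + c ^ 2 + 1) := by
    calc ‖B‖ ≤ ‖A₀‖ + ‖B - A₀‖ := norm_le_insert' _ _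
      _ ≤ c + (c + c ^ 2 + 1) := by nlinarith [ht.2]
  have hBB : ‖B ∘L B - A₀ ∘L A₀‖ ≤ t * (c + c ^ 2 + 1) * (c ^ 2 + 3 * c + 1) := by
    have hfactor : B ∘L B - A₀ ∘L A₀ = (B - A₀) ∘L B + A₀ ∘L (B - A₀) := by
      simp only [ContinuousLinearMap.sub_comp, ContinuousLinearMap.comp_sub]; abel
    calc ‖B ∘L B - A₀ ∘L A₀‖ ≤ ‖B - A₀‖ * ‖B‖ + ‖A₀‖ * ‖B - A₀‖ := by
          rw [hfactor]
          exact (norm_add_le _ _).trans (add_le_add (opNorm_comp_le _ _) (opNorm_comp_le _ _))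
      _ ≤ t * (c + c ^ 2 + 1) * (c + (c + c ^ 2 + 1)) + c * (t * (c + c ^ 2 + 1)) := by
          have := ht.1
          gcongr
      _ = t * (c + c ^ 2 + 1) * (c ^ 2 + 3 * c + 1) := by ring
  have hsplit : (-(R₀ + A₀ ∘L A₀) - (2 * L * t) • 1) + B ∘L B + R
      = (B ∘L B - A₀ ∘L A₀) + (R - R₀) - (2 * L * t) • 1 := by abel
  have h₁ := (abs_le.1 (abs_inner_apply_self_le (B ∘L B - A₀ ∘L A₀) w)).2
  have h₂ := (abs_le.1 (abs_inner_apply_self_le (R - R₀) w)).2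
  have hcoef : ‖B ∘L B - A₀ ∘L A₀‖ + ‖R - R₀‖ ≤ 2 * L * t := by nlinarith [ht.1]
  rw [hsplit, sub_apply, add_apply, inner_sub_left, inner_add_left, smul_apply, one_apply_eq_self,
    real_inner_smul_left, real_inner_self_eq_norm_sq]
  nlinarith [mul_le_mul_of_nonneg_right hcoef (sq_nonneg ‖w‖)]

theorem neg_sq_le_inner_riccatiBarrier [CompleteSpace F] (hA₀ : IsSelfAdjoint A₀) {c ε : ℝ}
    (hc : 0 < c) (hε : 0 < ε) (hA₀0 : ∀ v, 0 ≤ ⟪A₀ v, v⟫) (hA₀c : ∀ v, ⟪A₀ v, v⟫ ≤ c * ‖v‖ ^ 2)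
    (hct : c * t ≤ 1 / 2) {u : F} (hu : ‖u‖ = 1)
    (hεu : ε * ⟪R₀ u, u⟫ ^ 2 ≤ ⟪A₀ u, u⟫) :
    -(((2 * ε)⁻¹ + L) * t ^ 2) ≤ ⟪riccatiBarrier A₀ R₀ L t u, u⟫ := by
  rw [inner_riccatiBarrier_apply_self hA₀, hu, one_pow, mul_one]
  set a := ⟪A₀ u, u⟫
  set q := ⟪R₀ u, u⟫
  have hA₀u : t * ‖A₀ u‖ ^ 2 ≤ a / 2 := by
    nlinarith [hA₀.sq_norm_apply_le hc hA₀0 hA₀c u, hA₀0 u]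
  -- AM-GM: `t q ≤ ε q² / 2 + t² / (2 ε)`
  have hamgm : t * q ≤ ε * q ^ 2 / 2 + (2 * ε)⁻¹ * t ^ 2 := by
    have h := sq_nonneg (ε * q - t)
    have h' : (2 * ε)⁻¹ * (ε * q - t) ^ 2 = ε * q ^ 2 / 2 + (2 * ε)⁻¹ * t ^ 2 - t * q := by
      field_simp; ring
    nlinarith [inv_pos.2 (mul_pos two_pos hε)]
  nlinarith

end riccatiBarrier

theorem riccati_short_time_lower_bound [FiniteDimensional ℝ F] {A R R' : ℝ → F →L[ℝ] F}
    {A₀ : F →L[ℝ] F} {c c₁ ε L : ℝ} (hc : 0 < c) (hε : 0 < ε)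
    (hA : ∀ t ∈ Icc (0 : ℝ) 1, HasDerivAt A (-(A t ∘L A t) - R t) t)
    (hAsa : ∀ t ∈ Icc (0 : ℝ) 1, IsSelfAdjoint (A t))
    (hR : ∀ t ∈ Icc (0 : ℝ) 1, HasDerivAt R (R' t) t ∧ ‖R' t‖ ≤ c₁)
    (hR₀sa : IsSelfAdjoint (R 0)) (hR₀ : ‖R 0‖ ≤ c) (hA₀sa : IsSelfAdjoint A₀)
    (hA₀0 : ∀ v, 0 ≤ ⟪A₀ v, v⟫) (hA₀c : ∀ v, ⟪A₀ v, v⟫ ≤ c * ‖v‖ ^ 2)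
    (hA₀ε : ∀ w, ‖w‖ = 1 → ε * ⟪R 0 w, w⟫ ^ 2 ≤ ⟪A₀ w, w⟫) (h0 : ∀ w, ⟪A₀ w, w⟫ ≤ ⟪A 0 w, w⟫)
    (hL : (c + c ^ 2 + 1) * (c ^ 2 + 3 * c + 1) + c₁ ≤ 2 * L) :
    ∀ s ∈ Icc 0 (2 * (L + c))⁻¹, ∀ u, ‖u‖ = 1 → -(((2 * ε)⁻¹ + L) * s ^ 2) ≤ ⟪A s u, u⟫ := by
  intro s hs u hu
  have hc₁ : 0 ≤ c₁ := (norm_nonneg _).trans (hR 0 (by simp)).2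
  have hL1 : 1 ≤ 2 * L := by nlinarith
  set τ := (2 * (L + c))⁻¹
  have hLτ : L * τ ≤ 1 := by rw [← div_eq_mul_inv, div_le_one (by linarith)]; linarith
  have hcτ : c * τ ≤ 1 / 2 := by rw [← div_eq_mul_inv, div_le_iff₀ (by linarith)]; linarith
  have hsub : Icc 0 τ ⊆ Icc 0 1 :=
    Icc_subset_Icc_right (inv_le_one_of_one_le₀ (by linarith))
  have hbarrier := riccati_comparison (fun t ht => hA t (hsub ht))
    (fun t _ => hasDerivAt_riccatiBarrier) (fun t ht => hAsa t (hsub ht))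
    (fun t _ => hA₀sa.riccatiBarrier hR₀sa L t) (fun t ht w => ?_) (by simpa using h0) s hs u
  · exact (neg_sq_le_inner_riccatiBarrier hA₀sa hc hε hA₀0 hA₀c
      ((mul_le_mul_of_nonneg_left hs.2 hc.le).trans hcτ) hu (hA₀ε u hu)).trans hbarrier
  have hlip : ‖R t - R 0‖ ≤ c₁ * t := by
    simpa using norm_image_sub_le_of_norm_deriv_le_segment'
      (fun x hx => (hR x (hsub hx)).1.hasDerivWithinAt)
      (fun x hx => (hR x (hsub (Ico_subset_Icc_self hx))).2) t ht
  exact riccatiBarrier_isSubsolution (hA₀sa.norm_le_of_inner_le hc hA₀0 hA₀c) hR₀ hc₁ hlip hL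
    (hsub ht) ((mul_le_mul_of_nonneg_left ht.2 (by linarith)).trans hLτ) w

theorem SelfAdj.isSelfAdjoint {n : ℕ} {A : E n →L[ℝ] E n} (hA : SelfAdj A) : IsSelfAdjoint A :=
  ContinuousLinearMap.isSelfAdjoint_iff_isSymmetric.2 hA

/-- **Lemma (Riccati comparison, lower estimate).** Let `A(s)` be a self-adjoint
solution of the Riccati equation `A' + A² + R = 0` on `ℝⁿ` with `|R| ≤ C_R`,
`|R'| ≤ C_R'` for small `s ≥ 0`. Suppose there are `ε₀ > 0` and a self-adjoint
`A₀` with `A(0) ≥ A₀`, `A₀ ≤ C_R · Id` and `⟨A₀ w, w⟩ ≥ ε₀ ⟨R(0) w, w⟩²` for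
all unit `w`. Then there are `s₀ = s₀(C_R) > 0` and `C = C(C_R, C_R', ε₀) > 0`
with `A(s) ≥ -C s² · Id` for all `s ∈ (0, s₀]`. -/
theorem riccati_lower_estimate (C_R : ℝ) :
    ∃ s₀ : ℝ, 0 < s₀ ∧
    ∀ C_R' ε₀ : ℝ, 0 < ε₀ →
    ∃ C : ℝ, 0 < C ∧
    ∀ (n : ℕ) (A R R' : ℝ → (E n →L[ℝ] E n)) (A₀ : E n →L[ℝ] E n),
      (∀ s ∈ Icc (0 : ℝ) 1, SelfAdj (A s) ∧ SelfAdj (R s)) →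
      -- the Riccati equation `A'(s) + A(s)² + R(s) = 0`
      (∀ s ∈ Icc (0 : ℝ) 1, HasDerivAt A (-(A s ∘L A s) - R s) s) →
      -- `R` differentiable with derivative `R'`, `|R| ≤ C_R`, `|R'| ≤ C_R'`
      (∀ s ∈ Icc (0 : ℝ) 1, HasDerivAt R (R' s) s ∧ ‖R s‖ ≤ C_R ∧ ‖R' s‖ ≤ C_R') →
      SelfAdj A₀ →
      EndLE A₀ (A 0) →
      (∀ v : E n, (inner ℝ (A₀ v) v : ℝ) ≤ C_R * ‖v‖ ^ 2) →
      (∀ w : E n, ‖w‖ = 1 →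
        ε₀ * (inner ℝ (R 0 w) w : ℝ) ^ 2 ≤ (inner ℝ (A₀ w) w : ℝ)) →
      ∀ s ∈ Ioc (0 : ℝ) s₀, ∀ v : E n,
        -(C * s ^ 2) * ‖v‖ ^ 2 ≤ (inner ℝ (A s v) v : ℝ) := by
  refine ⟨1 / 2, by norm_num, fun C_R' ε₀ hε₀ => ?_⟩
  set c := |C_R| + 1
  set L := (c + c ^ 2 + 1) * (c ^ 2 + 3 * c + 1) + |C_R'|
  set τ := (2 * (L + c))⁻¹
  refine ⟨((2 * ε₀)⁻¹ + L) + (c + 3) / τ ^ 2, by positivity, ?_⟩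
  intro n A R R' A₀ hsa hA hR hA₀sa hA₀le hA₀C hA₀ε s hs v
  have hAsa : ∀ t ∈ Icc (0 : ℝ) 1, IsSelfAdjoint (A t) := fun t ht => (hsa t ht).1.isSelfAdjoint
  have hRc : ∀ t ∈ Icc (0 : ℝ) 1, ‖R t‖ ≤ c := fun t ht =>
    (hR t ht).2.1.trans ((le_abs_self C_R).trans (by linarith))
  have hA₀c : ∀ v, ⟪A₀ v, v⟫ ≤ c * ‖v‖ ^ 2 := fun v =>
    (hA₀C v).trans (by gcongr; linarith [le_abs_self C_R])
  have hA₀0 : ∀ v, 0 ≤ ⟪A₀ v, v⟫ := by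
    simpa using le_inner_apply_self_of_forall_norm_eq_one
      fun w hw => (mul_nonneg hε₀.le (sq_nonneg _)).trans (hA₀ε w hw)
  refine le_inner_apply_self_of_forall_norm_eq_one (fun u hu => ?_) v
  have hshort : 0 ≤ ((2 * ε₀)⁻¹ + L) * s ^ 2 := by positivity
  have hlong : 0 ≤ (c + 3) / τ ^ 2 * s ^ 2 := by positivity
  rcases le_or_gt s τ with hsτ | hτs
  · have := riccati_short_time_lower_bound (by positivity) hε₀ hA hAsa
      (fun t ht => ⟨(hR t ht).1, (hR t ht).2.2.trans (le_abs_self _)⟩)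
      (hsa 0 (by simp)).2.isSelfAdjoint (hRc 0 (by simp)) hA₀sa.isSelfAdjoint hA₀0 hA₀c hA₀ε
      hA₀le (by linarith [show 0 ≤ L by positivity]) s ⟨hs.1.le, hsτ⟩ u hu
    linarith
  · have := riccati_uniform_lower_bound (by positivity) hA hAsa hRc ⟨hs.1.le, hs.2⟩ hu
    have : c + 3 ≤ (c + 3) / τ ^ 2 * s ^ 2 := by
      rw [div_mul_eq_mul_div, le_div_iff₀ (by positivity)]
      gcongr
    linarith
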